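/- (Local finiteness transfer.) With the setup of the congruence-transfer lemma, define on each set H_t = union of H_{t,s} the quasi-order h ≤ h' iff h' = f ∘ h for some F-derived unary operation f. If for each sort t the associated order has only finitely many minimal elements, and the F-congruence ≡ on S is locally finite, then the induced G-congruence ≈ on T is locally finite. -/
import Mathlib


universe u v

/-- A many-sorted signature over a set `S` of sorts. -/
structure Signature (S : Type u) where
  Op : Type u
  arity : Op → List S
  sort : Op → S

/-- An algebra over a many-sorted signature. -/
structure MSAlgebra {S : Type u} (F : Signature S) where
  carrier : S → Type v
  interp : ∀ f : F.Op,
    (∀ i : Fin (F.arity f).length, carrier ((F.arity f).get i)) →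
      carrier (F.sort f)

/-- `rel` is a congruence on `M`. -/
def IsCongruence {S : Type u} {F : Signature S} (M : MSAlgebra.{u, v} F)
    (rel : ∀ s, M.carrier s → M.carrier s → Prop) : Prop :=
  (∀ s, Equivalence (rel s)) ∧
  ∀ (f : F.Op) (a b : ∀ i : Fin (F.arity f).length, M.carrier ((F.arity f).get i)),
    (∀ i, rel _ (a i) (b i)) → rel _ (M.interp f a) (M.interp f b)

/-- Terms over `F` with variables of sorts `X 0, …, X (r-1)`. -/
inductive TermV {S : Type u} (F : Signature S) {r : ℕ} (X : Fin r → S) : S → Type u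
  | var (i : Fin r) : TermV F X (X i)
  | op (f : F.Op)
      (args : ∀ i : Fin (F.arity f).length, TermV F X ((F.arity f).get i)) :
      TermV F X (F.sort f)

/-- Evaluation of a term with variables, given values for the variables. -/
def evalV {S : Type u} {F : Signature S} (M : MSAlgebra.{u, v} F) {r : ℕ}
    {X : Fin r → S} (v : ∀ i, M.carrier (X i)) :
    ∀ {s : S}, TermV F X s → M.carrier s
  | _, .var i => v i
  | _, .op f args => M.interp f fun i => evalV M v (args i)

/-- `φ` is a derived operation of the algebra `M`, of type
`(X 0, …, X (r-1)) → s`: it is defined by a term with variables. -/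
def IsDerived {S : Type u} {F : Signature S} (M : MSAlgebra.{u, v} F) {r : ℕ}
    (X : Fin r → S) (s : S) (φ : (∀ i, M.carrier (X i)) → M.carrier s) : Prop :=
  ∃ t : TermV F X s, ∀ v, φ v = evalV M v t


/-- The quasi-order on pairs `(s, h)` (with `h : TA.carrier t → SA.carrier s`)
given by: `p ≤ q` iff `q.2 = f ∘ p.2` for some unary `F`-derived operation `f`. -/
def LeH {SS : Type u} {TT : Type u} {F : Signature SS} {G : Signature TT}
    (SA : MSAlgebra.{u, v} F) (TA : MSAlgebra.{u, v} G) {t : TT}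
    (p q : Σ s : SS, (TA.carrier t → SA.carrier s)) : Prop :=
  ∃ f : SA.carrier p.1 → SA.carrier q.1,
    IsDerived SA (fun _ : Fin 1 => p.1) q.1 (fun v => f (v 0)) ∧ q.2 = f ∘ p.2

theorem evalV_congr {SS : Type u} {F : Signature SS} (SA : MSAlgebra.{u, v} F)
    (eqv : ∀ s, SA.carrier s → SA.carrier s → Prop) (heqv : IsCongruence SA eqv)
    {r : ℕ} {X : Fin r → SS} {s : SS} (tm : TermV F X s)
    (v w : ∀ i, SA.carrier (X i)) (hvw : ∀ i, eqv (X i) (v i) (w i)) :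
    eqv s (evalV SA v tm) (evalV SA w tm) := by
  induction tm with
  | var i => exact hvw i
  | op f args ih => exact heqv.2 f _ _ fun i => ih i

/-- Transfer of local finiteness.  In the setting of the congruence-transfer
lemma, if for each sort `t` the quasi-order `LeH` on `H_t` has only finitely
many minimal elements, below which every element of `H_t` lies, and if the
`F`-congruence `eqv` is locally finite, then the induced `G`-congruence `≈`
on `TA` is locally finite. -/
theorem local_finiteness_transfer
    {SS : Type u} {TT : Type u} (F : Signature SS) (G : Signature TT)
    (SA : MSAlgebra.{u, v} F) (TA : MSAlgebra.{u, v} G)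
    (H : ∀ (t : TT) (s : SS), Set (TA.carrier t → SA.carrier s))
    (hH : ∀ (g : G.Op) (s : SS) (h : TA.carrier (G.sort g) → SA.carrier s),
      h ∈ H (G.sort g) s →
      ∃ (σ : Fin (G.arity g).length → SS)
        (hi : ∀ i : Fin (G.arity g).length,
          TA.carrier ((G.arity g).get i) → SA.carrier (σ i)),
        (∀ i, hi i ∈ H ((G.arity g).get i) (σ i)) ∧
        ∃ φ : (∀ i, SA.carrier (σ i)) → SA.carrier s,
          IsDerived SA σ s φ ∧
          ∀ x : ∀ i : Fin (G.arity g).length, TA.carrier ((G.arity g).get i),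
            h (TA.interp g x) = φ fun i => hi i (x i))
    (eqv : ∀ s, SA.carrier s → SA.carrier s → Prop)
    (heqv : IsCongruence SA eqv)
    (hlocfin : ∀ s, Finite (Quot (eqv s)))
    (hmin : ∀ t : TT,
      ∃ (k : ℕ) (gs : Fin k → Σ s : SS, (TA.carrier t → SA.carrier s)),
        (∀ j, (gs j).2 ∈ H t (gs j).1) ∧
        (∀ (j : Fin k) (q : Σ s : SS, (TA.carrier t → SA.carrier s)),
          q.2 ∈ H t q.1 → LeH SA TA q (gs j) → LeH SA TA (gs j) q) ∧
        (∀ q : Σ s : SS, (TA.carrier t → SA.carrier s),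
          q.2 ∈ H t q.1 → ∃ j, LeH SA TA (gs j) q)) :
    ∀ t : TT, Finite (Quot (fun a b : TA.carrier t =>
      ∀ (s : SS) (h : TA.carrier t → SA.carrier s), h ∈ H t s →
        eqv s (h a) (h b))) := by
  intro t
  obtain ⟨k, gs, hmem, -, hcover⟩ := hmin t
  haveI : ∀ j : Fin k, Finite (Quot (eqv (gs j).1)) := fun j => hlocfin _
  set R := fun a b : TA.carrier t =>
      ∀ (s : SS) (h : TA.carrier t → SA.carrier s), h ∈ H t s →
        eqv s (h a) (h b) with hR
  let Φ : TA.carrier t → ∀ j : Fin k, Quot (eqv (gs j).1) :=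
    fun a j => Quot.mk _ ((gs j).2 a)
  have hΦ : ∀ a b, R a b → Φ a = Φ b := by
    intro a b hab
    funext j
    exact Quot.sound (hab _ _ (hmem j))
  refine Finite.of_injective (Quot.lift Φ hΦ) ?_
  intro x y
  refine Quot.induction_on₂ x y ?_
  intro a b hab
  refine Quot.sound ?_
  intro s h hh
  obtain ⟨j, f, ⟨tm, htm⟩, hfh⟩ := hcover ⟨s, h⟩ hh
  have hj : eqv (gs j).1 ((gs j).2 a) ((gs j).2 b) := by
    have := congrFun hab j
    exact ((heqv.1 _).eqvGen_iff).1 (Quot.eqvGen_exact this)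
  have : eqv s (f ((gs j).2 a)) (f ((gs j).2 b)) := by
    have h1 := htm (fun _ : Fin 1 => (gs j).2 a)
    have h2 := htm (fun _ : Fin 1 => (gs j).2 b)
    simp only at h1 h2
    rw [h1, h2]
    exact evalV_congr SA eqv heqv tm _ _ fun i => hj
  have ha := congrFun hfh a
  have hb := congrFun hfh b
  simp only [Function.comp] at ha hb
  rw [ha, hb]
  exact this
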